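/- Let $R$ be a Dedekind domain of characteristic $0$ with fraction field $F$, let $\mathfrak{A}$ be a Gorenstein $R$-order in a separable commutative $F$-algebra $A$, let $e$ be an idempotent of $A$, let $X$ be an $\mathfrak{A}$-lattice, and let $\eta \in X^e := \{x\in X : ex = x\}$ be an element such that $e' \cdot \eta \ne 0$ in $F\otimes_R X$ for every primitive idempotent $e'$ of $Ae$. Then: (1) the map $e \mapsto \eta$ induces an isomorphism of $\mathfrak{A}$-modules $\mathfrak{A}e \cong \mathfrak{A}\cdot\eta$; and (2) evaluation at $\eta$ induces an isomorphism $\operatorname{Hom}_{\mathfrak{A}}(\mathfrak{A}\cdot\eta, \mathfrak{A}) \cong \mathfrak{A}^e := \{x\in\mathfrak{A} : ex = x \text{ in } A\}$. -/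

import Mathlib

open CategoryTheory Opposite

universe u

/-!
Separability makes `A` reduced, hence (being Artinian) a finite product of fields. If `a • η = 0`
while `a e ≠ 0`, some field component of `a e` is non-zero, and multiplying `a e` by the inverse of
that component yields a primitive idempotent `e' = e' e` with `e' • η = 0`.

`𝔄 ∙ η ≅ 𝔄 ⧸ ann η`, so evaluation at `η` identifies `Hom(𝔄 ∙ η, 𝔄)` with the elements of `𝔄`
killed by `ann η = {b | b e = 0}`. Clearing denominators gives `c ∈ 𝔄` with `c = r (1 - e)` for a
non-zero-divisor `r` of `R`; then `c a = 0` forces `(1 - e) a = 0`.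
-/

def IsPrimitiveIdempotent {A : Type*} [CommSemiring A] (e : A) : Prop :=
  e ≠ 0 ∧ IsIdempotentElem e ∧ ∀ f : A, IsIdempotentElem f → f * e = f → f = 0 ∨ f = e

theorem IsPrimitiveIdempotent.map {A B : Type*} [CommSemiring A] [CommSemiring B] {e : A}
    (h : IsPrimitiveIdempotent e) (φ : A ≃+* B) : IsPrimitiveIdempotent (φ e) := by
  obtain ⟨hne, hidem, hprim⟩ := h
  refine ⟨(map_ne_zero_iff φ φ.injective).mpr hne, hidem.map φ, fun f hf hfe => ?_⟩
  have hfe' : φ.symm f * e = φ.symm f := by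
    rw [← φ.symm_apply_apply e, ← map_mul, hfe]
  simpa [φ.symm_apply_eq] using hprim (φ.symm f) (hf.map φ.symm) hfe'

theorem Pi.isPrimitiveIdempotent_single_one {ι : Type*} [DecidableEq ι] {K : ι → Type*}
    [∀ i, Field (K i)] (i : ι) : IsPrimitiveIdempotent (Pi.single i 1 : ∀ i, K i) := by
  refine ⟨fun h => one_ne_zero (by simpa using congrFun h i : (1 : K i) = 0),
    by rw [IsIdempotentElem, ← Pi.single_mul, one_mul], fun f hf hfe => ?_⟩
  have hf_single : f = Pi.single i (f i) := by
    rw [← mul_one (f i), Pi.single_mul_right, hfe]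
  rcases IsIdempotentElem.iff_eq_zero_or_one.mp (congrFun hf i) with h | h
  · left; rw [hf_single, h, Pi.single_zero]
  · right; rw [hf_single, h]

theorem exists_isPrimitiveIdempotent_mul_eq {A : Type*} [CommRing A] [IsArtinianRing A]
    [IsReduced A] {z : A} (hz : z ≠ 0) : ∃ e y : A, IsPrimitiveIdempotent e ∧ y * z = e := by
  classical
  let _ := IsArtinianRing.fieldOfSubtypeIsMaximal (R := A)
  let π := (IsArtinianRing.equivPi A).toRingEquiv
  obtain ⟨I, hI⟩ : ∃ I, π z I ≠ 0 := by
    by_contra! h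
    exact hz (π.injective ((funext h).trans (map_zero π).symm))
  refine ⟨π.symm (Pi.single I 1), π.symm (Pi.single I (π z I)⁻¹),
    (Pi.isPrimitiveIdempotent_single_one I).map π.symm, π.injective ?_⟩
  rw [map_mul, π.apply_symm_apply, π.apply_symm_apply, ← Pi.single_mul_left, inv_mul_cancel₀ hI]

theorem Algebra.IsSeparable.isReduced (F A : Type*) [Field F] [CommRing A] [Algebra F A]
    [Algebra.IsSeparable F A] : IsReduced A := by
  refine ⟨fun x ⟨n, hn⟩ => ?_⟩
  rcases eq_or_ne n 0 with rfl | hn0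
  · simpa using congrArg (x * ·) hn
  have hdvd : minpoly F x ∣ Polynomial.X ^ n := minpoly.dvd F x (by simp [hn])
  have hdvd_X := ((Algebra.IsSeparable.isSeparable F x).squarefree.dvd_pow_iff_dvd hn0).mp hdvd
  simpa using minpoly.dvd_iff.mp hdvd_X

theorem IsIdempotentElem.smul_eq_zero_iff_mul_eq_zero {A V : Type*} [CommRing A]
    [IsArtinianRing A] [IsReduced A] [AddCommGroup V] [Module A V] {e : A}
    (he : IsIdempotentElem e) {η : V} (hη : e • η = η)
    (hη_ne : ∀ e' : A, IsPrimitiveIdempotent e' → e' * e = e' → e' • η ≠ 0) (z : A) :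
    z • η = 0 ↔ z * e = 0 := by
  refine ⟨fun hz => ?_, fun hz => by rw [← hη, smul_smul, hz, zero_smul]⟩
  by_contra hze
  obtain ⟨e', y, he', hy⟩ := exists_isPrimitiveIdempotent_mul_eq hze
  refine hη_ne e' he' ?_ ?_
  · rw [← hy, mul_assoc, mul_assoc, he.eq]
  · rw [← hy, mul_smul, mul_smul, hη, hz, smul_zero]

theorem IsLocalization.exists_smul_mem_of_span_eq_top {R F A : Type*} [CommRing R]
    (M : Submonoid R) [CommRing F] [Algebra R F] [IsLocalization M F] [AddCommGroup A]
    [Module R A] [Module F A] [IsScalarTower R F A] {N : Submodule R A}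
    (hN : Submodule.span F (N : Set A) = ⊤) (x : A) : ∃ r : M, (r : R) • x ∈ N := by
  obtain ⟨y, hy, r, rfl⟩ := (IsLocalization.mem_span_iff M).mp (hN ▸ Submodule.mem_top (x := x))
  refine ⟨r, ?_⟩
  rwa [← algebraMap_smul F (r : R), smul_smul, mul_comm, IsLocalization.mk'_spec, map_one,
    one_smul, ← Submodule.span_eq N]

theorem IsIdempotentElem.mul_algebraMap_eq_self_iff {R F A 𝔄 : Type*} [CommRing R]
    (M : Submonoid R) [CommRing F] [Algebra R F] [IsLocalization M F] [CommRing A] [Algebra F A]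
    [Algebra R A] [IsScalarTower R F A] [CommRing 𝔄] [Algebra R 𝔄] [Algebra 𝔄 A]
    [IsScalarTower R 𝔄 A] (hinj : Function.Injective (algebraMap 𝔄 A))
    (hspan : Submodule.span F (Set.range (algebraMap 𝔄 A)) = ⊤) {e : A}
    (he : IsIdempotentElem e) (a : 𝔄) :
    e * algebraMap 𝔄 A a = algebraMap 𝔄 A a ↔ ∀ b : 𝔄, algebraMap 𝔄 A b * e = 0 → b * a = 0 := by
  refine ⟨fun ha b hb => hinj ?_, fun ha => ?_⟩
  · rw [map_mul, map_zero, ← ha, ← mul_assoc, hb, zero_mul]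
  let ι := (IsScalarTower.toAlgHom R 𝔄 A).toLinearMap
  obtain ⟨r, c, hc⟩ := IsLocalization.exists_smul_mem_of_span_eq_top M
    (N := LinearMap.range ι) (by rwa [LinearMap.coe_range]) (1 - e)
  replace hc : algebraMap 𝔄 A c = (r : R) • (1 - e) := hc
  have hca : c * a = 0 :=
    ha c (by rw [hc, smul_mul_assoc, sub_mul, one_mul, he.eq, sub_self, smul_zero])
  have : (algebraMap R F r) • ((1 - e) * algebraMap 𝔄 A a) = 0 := by
    rw [algebraMap_smul, ← smul_mul_assoc, ← hc, ← map_mul, hca, map_zero]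
  rw [(IsLocalization.map_units F r).smul_eq_zero, sub_mul, one_mul, sub_eq_zero] at this
  exact this.symm

theorem Submodule.eval_span_singleton_injective {R M N : Type*} [Ring R] [AddCommGroup M]
    [Module R M] [AddCommGroup N] [Module R N] (x : M) :
    Function.Injective fun θ : (R ∙ x) →ₗ[R] N => θ ⟨x, mem_span_singleton_self x⟩ := by
  intro θ₁ θ₂ hθ
  ext ⟨v, hv⟩
  obtain ⟨b, rfl⟩ := mem_span_singleton.mp hv
  have hv_eq : (⟨b • x, hv⟩ : R ∙ x) = b • ⟨x, mem_span_singleton_self x⟩ := rfl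
  rw [hv_eq, map_smul, map_smul]
  exact congrArg (b • ·) hθ

theorem Submodule.range_eval_span_singleton {R M N : Type*} [Ring R] [AddCommGroup M]
    [Module R M] [AddCommGroup N] [Module R N] (x : M) :
    Set.range (fun θ : (R ∙ x) →ₗ[R] N => θ ⟨x, mem_span_singleton_self x⟩) =
      {n | ∀ b : R, b • x = 0 → b • n = 0} := by
  ext n
  refine ⟨?_, fun hn => ?_⟩
  · rintro ⟨θ, rfl⟩ b hb
    rw [← map_smul]
    convert θ.map_zero
    exact Subtype.ext hb
  have hker : Ideal.torsionOf R M x ≤ LinearMap.ker (LinearMap.toSpanSingleton R N n) := hn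
  let θ := (Ideal.torsionOf R M x).liftQ (LinearMap.toSpanSingleton R N n) hker ∘ₗ
    (Ideal.quotTorsionOfEquivSpanSingleton R M x).symm.toLinearMap
  refine ⟨θ, ?_⟩
  have h_one : (Ideal.quotTorsionOfEquivSpanSingleton R M x).symm ⟨x, mem_span_singleton_self x⟩ =
      Submodule.Quotient.mk 1 := by
    rw [LinearEquiv.symm_apply_eq, Ideal.quotTorsionOfEquivSpanSingleton_apply_mk, one_smul]
  change liftQ _ _ hker ((Ideal.quotTorsionOfEquivSpanSingleton R M x).symm _) = n
  rw [h_one, liftQ_apply, LinearMap.toSpanSingleton_apply, one_smul]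

theorem generator_span_eval_iso_general
    (R : Type u) [CommRing R]
    (F : Type u) [Field F] [Algebra R F] [IsFractionRing R F]
    (A : Type u) [CommRing A] [Algebra F A] [FiniteDimensional F A] [Algebra.IsSeparable F A]
    [Algebra R A] [IsScalarTower R F A]
    (𝔄 : Type u) [CommRing 𝔄] [Algebra R 𝔄]
    [Algebra 𝔄 A] [IsScalarTower R 𝔄 A]
    (hinj : Function.Injective (algebraMap 𝔄 A))
    (hspan : Submodule.span F (Set.range (algebraMap 𝔄 A)) = ⊤)
    (e : A) (he : IsIdempotentElem e)
    (V : Type u) [AddCommGroup V] [Module A V]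
    [Module 𝔄 V] [IsScalarTower 𝔄 A V]
    (η : V) (hηfix : e • η = η)
    (hηnz : ∀ e' : A, e' ≠ 0 → IsIdempotentElem e' →
      (∀ f : A, IsIdempotentElem f → f * e' = f → f = 0 ∨ f = e') →
      e' * e = e' → e' • η ≠ 0) :
    (∀ a : 𝔄, a • η = 0 ↔ algebraMap 𝔄 A a * e = 0) ∧
    Function.Injective
      (fun θ : (Submodule.span 𝔄 ({η} : Set V)) →ₗ[𝔄] 𝔄 =>
        θ ⟨η, Submodule.mem_span_singleton_self η⟩) ∧
    Set.range
      (fun θ : (Submodule.span 𝔄 ({η} : Set V)) →ₗ[𝔄] 𝔄 =>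
        θ ⟨η, Submodule.mem_span_singleton_self η⟩) =
      {a : 𝔄 | e * algebraMap 𝔄 A a = algebraMap 𝔄 A a} := by
  have : IsArtinianRing A := isArtinian_of_tower F inferInstance
  have : IsReduced A := Algebra.IsSeparable.isReduced F A
  have hann (a : 𝔄) : a • η = 0 ↔ algebraMap 𝔄 A a * e = 0 := by
    rw [← algebraMap_smul A a η]
    exact he.smul_eq_zero_iff_mul_eq_zero hηfix
      (fun e' ⟨hne, hidem, hprim⟩ => hηnz e' hne hidem hprim) _
  refine ⟨hann, Submodule.eval_span_singleton_injective η, ?_⟩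
  rw [Submodule.range_eval_span_singleton]
  ext a
  simp only [smul_eq_mul, hann]
  exact (he.mul_algebraMap_eq_self_iff (nonZeroDivisors R) hinj hspan a).symm

/-- Let `R` be a Dedekind domain of characteristic `0` with fraction field
`F`, let `𝔄` be a Gorenstein `R`-order in a finite-dimensional separable commutative
`F`-algebra `A`, let `e` be an idempotent of `A`, and let `X` be an `𝔄`-lattice (realised as
a finitely generated `𝔄`-submodule of an `A`-module `V` which is an `F`-vector space). Let
`η ∈ X` satisfy `e • η = η` and have non-zero component at each simple component of `Ae`,
i.e. `e' • η ≠ 0` for every primitive idempotent `e'` of `A` with `e' e = e'`. Then: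
(1) the assignment `e ↦ η` induces an isomorphism `𝔄e ≅ 𝔄·η`, i.e. for `a ∈ 𝔄` one has
`a • η = 0` exactly when `a e = 0` in `A`; and (2) evaluation at `η` induces an isomorphism
`Hom_𝔄(𝔄·η, 𝔄) ≅ 𝔄ᵉ = {a ∈ 𝔄 : e a = a}`: the evaluation map is injective with image
exactly `𝔄ᵉ`. -/
theorem generator_span_eval_iso
    (R : Type u) [CommRing R] [IsDedekindDomain R] [CharZero R]
    (F : Type u) [Field F] [Algebra R F] [IsFractionRing R F]
    (A : Type u) [CommRing A] [Algebra F A] [FiniteDimensional F A] [Algebra.IsSeparable F A]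
    [Algebra R A] [IsScalarTower R F A]
    (𝔄 : Type u) [CommRing 𝔄] [Algebra R 𝔄] [Module.Finite R 𝔄]
    [Algebra 𝔄 A] [IsScalarTower R 𝔄 A]
    (hinj : Function.Injective (algebraMap 𝔄 A))
    (hspan : Submodule.span F (Set.range (algebraMap 𝔄 A)) = ⊤)
    (hGor : ∀ (N : Type u) [AddCommGroup N] [Module 𝔄 N] [Module R N] [IsScalarTower R 𝔄 N],
      Module.Finite 𝔄 N → (∀ (r : R) (n : N), r • n = 0 → r = 0 ∨ n = 0) →
      Subsingleton (((Ext 𝔄 (ModuleCat.{u} 𝔄) 1).obj (op (ModuleCat.of 𝔄 N))).obj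
        (ModuleCat.of 𝔄 𝔄)))
    (e : A) (he : IsIdempotentElem e)
    (V : Type u) [AddCommGroup V] [Module A V] [Module F V] [IsScalarTower F A V]
    [Module 𝔄 V] [IsScalarTower 𝔄 A V] [Module R V] [IsScalarTower R F V]
    [IsScalarTower R 𝔄 V]
    (X : Submodule 𝔄 V) (hXfg : X.FG)
    (η : V) (hηX : η ∈ X) (hηfix : e • η = η)
    (hηnz : ∀ e' : A, e' ≠ 0 → IsIdempotentElem e' →
      (∀ f : A, IsIdempotentElem f → f * e' = f → f = 0 ∨ f = e') →
      e' * e = e' → e' • η ≠ 0) :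
    (∀ a : 𝔄, a • η = 0 ↔ algebraMap 𝔄 A a * e = 0) ∧
    Function.Injective
      (fun θ : (Submodule.span 𝔄 ({η} : Set V)) →ₗ[𝔄] 𝔄 =>
        θ ⟨η, Submodule.mem_span_singleton_self η⟩) ∧
    Set.range
      (fun θ : (Submodule.span 𝔄 ({η} : Set V)) →ₗ[𝔄] 𝔄 =>
        θ ⟨η, Submodule.mem_span_singleton_self η⟩) =
      {a : 𝔄 | e * algebraMap 𝔄 A a = algebraMap 𝔄 A a} :=
  generator_span_eval_iso_general R F A 𝔄 hinj hspan e he V η hηfix hηnz
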